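/- arXiv:2009.04239 — 2 statements merged into one kernel-verified Lean document; each statement's English description precedes it below -/
import Mathlib

section
/- (Proposition 3 of the paper, local error bound, in Cameron–Martin form.) Let H be a real Hilbert space, d ∈ ℕ, and let φ : Fin d → H be a linearly independent family with invertible Gram matrix G (entries G i j = ⟪φ i, φ j⟫). Let a, u† ∈ H and f ∈ ℝ^d with ⟪φ i, u†⟫ = f i for all i, and let ā = a + ∑_j (G⁻¹ (f − b))_j • φ j with b i = ⟪φ i, a⟫. Then for every ℓ ∈ H, writing c i = ⟪φ i, ℓ⟫, one has |⟪ℓ, ā⟫ − ⟪ℓ, u†⟫| ≤ ( ‖ℓ‖² − ∑_{i,j} c_i (G⁻¹)_{i j} c_j )^{1/2} · ‖a − u†‖. -/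
open scoped RealInnerProductSpace

/-- Proposition 3 of the paper (local error bound), in Cameron–Martin form:
`|⟪ℓ, ā⟫ − ⟪ℓ, u†⟫| ≤ (‖ℓ‖² − cᵀ G⁻¹ c)^{1/2} · ‖a − u†‖`. -/
theorem local_error_bound
    {H : Type*} [NormedAddCommGroup H] [InnerProductSpace ℝ H] [CompleteSpace H]
    {d : ℕ} (φ : Fin d → H) (hφ : LinearIndependent ℝ φ)
    (G : Matrix (Fin d) (Fin d) ℝ) (hG : ∀ i j, G i j = ⟪φ i, φ j⟫)
    (hGinv : IsUnit G)
    (a udag : H) (f : Fin d → ℝ) (hf : ∀ i, ⟪φ i, udag⟫ = f i)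
    (b : Fin d → ℝ) (hb : ∀ i, b i = ⟪φ i, a⟫)
    (abar : H) (habar : abar = a + ∑ j, G⁻¹.mulVec (f - b) j • φ j)
    (ℓ : H) (c : Fin d → ℝ) (hc : ∀ i, c i = ⟪φ i, ℓ⟫) :
    |⟪ℓ, abar⟫ - ⟪ℓ, udag⟫| ≤
      Real.sqrt (‖ℓ‖ ^ 2 - ∑ i, ∑ j, c i * G⁻¹ i j * c j) * ‖a - udag‖ := by
  have hdet : IsUnit G.det := (Matrix.isUnit_iff_isUnit_det G).mp hGinv
  have hGsym : Matrix.transpose G = G := by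
    ext i j; simp [Matrix.transpose_apply, hG, real_inner_comm]
  have hsym : ∀ i j, G⁻¹ i j = G⁻¹ j i := by
    intro i j
    have : Matrix.transpose G⁻¹ = G⁻¹ := by rw [Matrix.transpose_nonsing_inv, hGsym]
    calc G⁻¹ i j = Matrix.transpose G⁻¹ j i := rfl
    _ = G⁻¹ j i := by rw [this]
  set m : Fin d → ℝ := G⁻¹.mulVec c with hm
  set v : H := ∑ i, m i • φ i with hv
  have hcℓ : ∀ i, ⟪ℓ, φ i⟫ = c i := fun i => by rw [hc, real_inner_comm]
  -- ⟪ℓ, v⟫ = ∑ m i * c i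
  have key1 : ⟪ℓ, v⟫ = ∑ i, m i * c i := by
    rw [hv, inner_sum]
    exact Finset.sum_congr rfl fun i _ => by
      rw [real_inner_smul_right, hcℓ]
  -- ⟪v, v⟫ = ∑ m i * c i
  have hGm : G.mulVec m = c := by
    rw [hm, Matrix.mulVec_mulVec, Matrix.mul_nonsing_inv _ hdet, Matrix.one_mulVec]
  have key2 : ⟪v, v⟫ = ∑ i, m i * c i := by
    rw [hv, sum_inner]
    refine Finset.sum_congr rfl fun i _ => ?_
    rw [real_inner_smul_left, inner_sum]
    have : ⟪φ i, ∑ j, m j • φ j⟫ = (G.mulVec m) i := by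
      rw [inner_sum, Matrix.mulVec, dotProduct]
      exact Finset.sum_congr rfl fun j _ => by
        rw [real_inner_smul_right, hG]; ring
    rw [inner_sum] at this
    rw [this, hGm]
  -- S = ∑ m i * c i
  have key3 : (∑ i, ∑ j, c i * G⁻¹ i j * c j) = ∑ i, m i * c i := by
    refine Finset.sum_congr rfl fun i _ => ?_
    rw [hm, Matrix.mulVec, dotProduct, Finset.sum_mul]
    exact Finset.sum_congr rfl fun j _ => by ring
  -- the error term
  have key4 : ⟪ℓ, abar⟫ - ⟪ℓ, udag⟫ = ⟪ℓ - v, a - udag⟫ := by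
    have hswap : (∑ j, G⁻¹.mulVec (f - b) j * c j) = ∑ i, m i * (f i - b i) := by
      simp only [hm, Matrix.mulVec, dotProduct, Finset.sum_mul]
      rw [Finset.sum_comm]
      refine Finset.sum_congr rfl fun i _ => Finset.sum_congr rfl fun j _ => ?_
      rw [hsym j i]
      simp [Pi.sub_apply]; ring
    have hφw : ∀ i, ⟪φ i, a - udag⟫ = b i - f i := fun i => by
      rw [inner_sub_right, hf, hb]
    rw [habar, inner_add_right, inner_sum, inner_sub_left, inner_sub_right]
    have h1 : (∑ j, ⟪ℓ, G⁻¹.mulVec (f - b) j • φ j⟫) = ∑ j, G⁻¹.mulVec (f - b) j * c j := by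
      exact Finset.sum_congr rfl fun j _ => by rw [real_inner_smul_right, hcℓ]
    have h2 : ⟪v, a - udag⟫ = ∑ i, m i * (b i - f i) := by
      rw [hv, sum_inner]
      exact Finset.sum_congr rfl fun i _ => by
        rw [real_inner_smul_left, hφw]
    rw [h1, hswap, inner_sub_right] at *
    rw [h2]
    ring_nf
    have hx : ∀ x ∈ Finset.univ, m x * f x - m x * b x = -(m x * (b x - f x)) :=
      fun x _ => by ring
    rw [Finset.sum_congr rfl hx, Finset.sum_neg_distrib]
    ring
  -- norm computation
  have key5 : ‖ℓ - v‖ ^ 2 = ‖ℓ‖ ^ 2 - ∑ i, ∑ j, c i * G⁻¹ i j * c j := by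
    have := real_inner_self_eq_norm_sq (ℓ - v)
    have hℓ := real_inner_self_eq_norm_sq ℓ
    rw [inner_sub_sub_self] at this
    rw [key3]
    nlinarith [key1, key2, real_inner_comm ℓ v]
  rw [key4, ← key5, Real.sqrt_sq (by positivity)]
  exact abs_real_inner_le_norm _ _
end

section
/- Let H be a real Hilbert space, d ∈ ℕ, and let φ : Fin d → H be a linearly independent family with invertible Gram matrix G (entries G i j = ⟪φ i, φ j⟫). Let a, u† ∈ H and f ∈ ℝ^d with ⟪φ i, u†⟫ = f i for all i, and let ā = a + ∑_j (G⁻¹ (f − b))_j • φ j with b i = ⟪φ i, a⟫. Then ‖ā − u†‖ ≤ ‖a − u†‖: conditioning on the information can only decrease the Cameron–Martin-norm distance of the mean to the truth. -/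
open scoped RealInnerProductSpace

/-- Conditioning on exact information can only decrease the Cameron–Martin
distance of the mean to the truth: `‖ā − u†‖ ≤ ‖a − u†‖`. -/
theorem posterior_mean_error_le_prior_mean_error
    {H : Type*} [NormedAddCommGroup H] [InnerProductSpace ℝ H] [CompleteSpace H]
    {d : ℕ} (φ : Fin d → H) (hφ : LinearIndependent ℝ φ)
    (G : Matrix (Fin d) (Fin d) ℝ) (hG : ∀ i j, G i j = ⟪φ i, φ j⟫)
    (hGinv : IsUnit G)
    (a udag : H) (f : Fin d → ℝ) (hf : ∀ i, ⟪φ i, udag⟫ = f i)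
    (b : Fin d → ℝ) (hb : ∀ i, b i = ⟪φ i, a⟫)
    (abar : H) (habar : abar = a + ∑ j, G⁻¹.mulVec (f - b) j • φ j) :
    ‖abar - udag‖ ≤ ‖a - udag‖ := by
  set c : Fin d → ℝ := G⁻¹.mulVec (f - b) with hc
  set v : H := ∑ j, c j • φ j with hv
  have hGc : G.mulVec c = f - b := by
    rw [hc, Matrix.mulVec_mulVec, Matrix.mul_nonsing_inv _ ((Matrix.isUnit_iff_isUnit_det G).mp hGinv), Matrix.one_mulVec]
  -- orthogonality of residual to each φ i
  have horth : ∀ i, ⟪φ i, abar - udag⟫ = 0 := by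
    intro i
    rw [habar]
    have : ⟪φ i, a + v - udag⟫ = ⟪φ i, a⟫ + ∑ j, c j * ⟪φ i, φ j⟫ - ⟪φ i, udag⟫ := by
      rw [inner_sub_right, inner_add_right, hv, inner_sum]
      simp [inner_smul_right]
    rw [this, hf i, ← hb i]
    have : ∑ j, c j * ⟪φ i, φ j⟫ = G.mulVec c i := by
      rw [Matrix.mulVec, dotProduct]
      exact Finset.sum_congr rfl fun j _ => by rw [hG, mul_comm]
    rw [this, hGc]
    simp
  have hov : ⟪abar - udag, v⟫ = 0 := by
    rw [hv, inner_sum]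
    refine Finset.sum_eq_zero fun j _ => ?_
    rw [inner_smul_right, real_inner_comm, horth j, mul_zero]
  have hsplit : a - udag = (abar - udag) - v := by
    rw [habar]; abel
  have hpyth : ‖a - udag‖ ^ 2 = ‖abar - udag‖ ^ 2 + ‖v‖ ^ 2 := by
    rw [hsplit, norm_sub_sq_real, hov]; ring
  nlinarith [norm_nonneg (a - udag), norm_nonneg (abar - udag), sq_nonneg ‖v‖]
end
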